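/- arXiv:1311.3056 — 4 statements merged into one kernel-verified Lean document; each statement's English description precedes it below -/
import Mathlib

section
/- Let γ : [0,L] → ℝ^d be a C^{1,1} arc length curve with ‖γ''‖_{L^∞} = K, and let s ≤ b ≤ t. Then |∫_s^t ∫_b^t ⟨γ'(v), γ'(v) - γ'(u)⟩ du dv| ≤ K² |t-s|³ |t-b|. -/
/-!
For unit vectors `a`, `b` one has `⟪a, a - b⟫ = ‖a - b‖² / 2`, so the integrand is quadratic in
the increment of `γ'`, which is at most `K |v - u| ≤ K |t - s|` by the Lipschitz bound on `γ'`.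
Integrating this pointwise bound over `[s, t] × [b, t]` gives the estimate.
-/

open MeasureTheory Set
open scoped RealInnerProductSpace NNReal

theorem inner_sub_eq_norm_sub_sq_div_two_of_norm_eq {E : Type*} [NormedAddCommGroup E]
    [InnerProductSpace ℝ E] {a b : E} (h : ‖a‖ = ‖b‖) :
    ⟪a, a - b⟫ = ‖a - b‖ ^ 2 / 2 := by
  rw [inner_sub_right, real_inner_self_eq_norm_sq, norm_sub_sq_real, ← h]
  ring

theorem LipschitzOnWith.abs_inner_sub_le_of_norm_eq {α E : Type*} [PseudoMetricSpace α]
    [NormedAddCommGroup E] [InnerProductSpace ℝ E] {K : ℝ≥0} {f : α → E} {s : Set α} {c : ℝ}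
    (hf : LipschitzOnWith K f s) (hc : ∀ x ∈ s, ‖f x‖ = c) {x y : α} (hx : x ∈ s) (hy : y ∈ s) :
    |⟪f x, f x - f y⟫| ≤ K ^ 2 * dist x y ^ 2 / 2 := by
  have hdist : ‖f x - f y‖ ≤ K * dist x y := by
    simpa only [dist_eq_norm] using hf.dist_le_mul x hx y hy
  rw [inner_sub_eq_norm_sub_sq_div_two_of_norm_eq ((hc x hx).trans (hc y hy).symm),
    abs_of_nonneg (by positivity), ← mul_pow]
  gcongr

theorem intervalIntegral.norm_integral_integral_le_of_norm_le_const {E : Type*}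
    [NormedAddCommGroup E] [NormedSpace ℝ E] {F : ℝ → ℝ → E} {a b c d C : ℝ}
    (h : ∀ v ∈ uIcc a b, ∀ u ∈ uIcc c d, ‖F v u‖ ≤ C) :
    ‖∫ v in a..b, ∫ u in c..d, F v u‖ ≤ C * |d - c| * |b - a| :=
  norm_integral_le_of_norm_le_const fun v hv ↦
    norm_integral_le_of_norm_le_const fun u hu ↦ h v (uIoc_subset_uIcc hv) u (uIoc_subset_uIcc hu)

theorem stmt3_general (d : ℕ) (L K : ℝ)
    (γ' : ℝ → EuclideanSpace ℝ (Fin d))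
    (hunit : ∀ u ∈ Set.Icc 0 L, ‖γ' u‖ = 1)
    (hlip' : LipschitzOnWith (Real.toNNReal K) γ' (Set.Icc 0 L))
    (s b t : ℝ) (hs : s ∈ Set.Icc 0 L) (ht : t ∈ Set.Icc 0 L)
    (hsb : s ≤ b) (hbt : b ≤ t) :
    |∫ v in s..t, ∫ u in b..t, ⟪γ' v, γ' v - γ' u⟫|
      ≤ K ^ 2 * |t - s| ^ 3 * |t - b| := by
  have hsub : uIcc b t ⊆ uIcc s t :=
    uIcc_subset_uIcc (Icc_subset_uIcc ⟨hsb, hbt⟩) right_mem_uIcc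
  have hpoint : ∀ v ∈ uIcc s t, ∀ u ∈ uIcc b t, ‖⟪γ' v, γ' v - γ' u⟫‖ ≤ K ^ 2 * |t - s| ^ 2 := by
    intro v hv u hu
    have hst : uIcc s t ⊆ Icc 0 L := uIcc_subset_Icc hs ht
    have hKsq : (Real.toNNReal K : ℝ) ^ 2 ≤ K ^ 2 := by
      simpa only [sq_abs] using pow_le_pow_left₀ (by positivity) (Real.coe_toNNReal_le K) 2
    have hvu : dist v u ≤ |t - s| := by
      simpa only [Real.dist_eq, abs_sub_comm s t] using Real.dist_le_of_mem_uIcc hv (hsub hu)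
    calc ‖⟪γ' v, γ' v - γ' u⟫‖
        ≤ (Real.toNNReal K : ℝ) ^ 2 * dist v u ^ 2 / 2 :=
          hlip'.abs_inner_sub_le_of_norm_eq hunit (hst hv) (hst (hsub hu))
      _ ≤ K ^ 2 * |t - s| ^ 2 / 2 := by gcongr
      _ ≤ K ^ 2 * |t - s| ^ 2 := half_le_self (by positivity)
  calc |∫ v in s..t, ∫ u in b..t, ⟪γ' v, γ' v - γ' u⟫|
      ≤ K ^ 2 * |t - s| ^ 2 * |t - b| * |t - s| :=
        intervalIntegral.norm_integral_integral_le_of_norm_le_const hpoint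
    _ = K ^ 2 * |t - s| ^ 3 * |t - b| := by ring

/-- For a `C^{1,1}` arc length curve `γ : [0,L] → ℝ^d` with
`‖γ''‖_{L^∞} = K` and `s ≤ b ≤ t`:
`|∫_s^t ∫_b^t ⟨γ'(v), γ'(v) - γ'(u)⟩ du dv| ≤ K² |t-s|³ |t-b|`. -/
theorem stmt3 (d : ℕ) (L K : ℝ) (hL : 0 < L) (hK : 0 ≤ K)
    (γ γ' γ'' : ℝ → EuclideanSpace ℝ (Fin d))
    (hderiv : ∀ u ∈ Set.Icc 0 L, HasDerivWithinAt γ (γ' u) (Set.Icc 0 L) u)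
    (hunit : ∀ u ∈ Set.Icc 0 L, ‖γ' u‖ = 1)
    (hlip' : LipschitzOnWith (Real.toNNReal K) γ' (Set.Icc 0 L))
    (hderiv2 : ∀ᵐ u ∂(volume.restrict (Set.Icc 0 L)),
      HasDerivWithinAt γ' (γ'' u) (Set.Icc 0 L) u ∧ ‖γ'' u‖ ≤ K)
    (s b t : ℝ) (hs : s ∈ Set.Icc 0 L) (ht : t ∈ Set.Icc 0 L)
    (hsb : s ≤ b) (hbt : b ≤ t) :
    |∫ v in s..t, ∫ u in b..t, ⟪γ' v, γ' v - γ' u⟫|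
      ≤ K ^ 2 * |t - s| ^ 3 * |t - b| :=
  stmt3_general d L K γ' hunit hlip' s b t hs ht hsb hbt
end

section
/- In the setting of the previous lemma, if additionally z ∈ Y, then F(z) = inf_Y F and lim_n F_n(z_n) = F(z). -/
/-!
Almost minimality of `z n` makes `F n (z n)` asymptotically no larger than `F n (y n)` for any
other sequence `y`, so the recovery sequences bound `limsup F n (z n)` by `F y` for every
`y ∈ Y`, while the liminf inequality bounds `liminf F n (z n)` from below by `F z`. When `z ∈ Y`
these bounds squeeze `F n (z n)` to `F z` and make `F z` the infimum over `Y`.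
-/

open Filter Topology

theorem EReal.le_of_forall_pos_le_add {x y : EReal} (h : ∀ ε : ℝ, 0 < ε → y ≤ x + ε) :
    y ≤ x := by
  refine EReal.le_of_forall_lt_iff_le.1 fun z hxz => ?_
  induction x with
  | bot => exact (by simpa using h 1 one_pos : y = ⊥) ▸ bot_le
  | coe x =>
    have hxz : x < z := by exact_mod_cast hxz
    have := h (z - x) (by linarith)
    rwa [← EReal.coe_add, add_sub_cancel] at this
  | top => exact absurd hxz (not_lt.2 le_top)

theorem EReal.limsup_le_limsup_of_forall_pos_eventually_le_add {α : Type*} {l : Filter α}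
    [l.NeBot] {u v : α → EReal} (h : ∀ ε : ℝ, 0 < ε → ∀ᶠ a in l, u a ≤ v a + ε) :
    limsup u l ≤ limsup v l :=
  EReal.le_of_forall_pos_le_add fun ε hε =>
    calc limsup u l ≤ limsup (fun a => v a + ε) l := limsup_le_limsup (h ε hε)
      _ ≤ limsup v l + limsup (fun _ => (ε : EReal)) l :=
          EReal.limsup_add_le (.inr (by simp)) (.inr (by simp))
      _ = limsup v l + ε := by rw [limsup_const]

theorem limsup_le_limsup_of_tendsto_sub_iInf {ι X : Type*} {l : Filter ι} [l.NeBot]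
    {F : ι → X → EReal} {z : ι → X}
    (hz : Tendsto (fun n => F n (z n) - ⨅ x, F n x) l (𝓝 0)) (y : ι → X) :
    limsup (fun n => F n (z n)) l ≤ limsup (fun n => F n (y n)) l := by
  refine EReal.limsup_le_limsup_of_forall_pos_eventually_le_add fun ε hε => ?_
  filter_upwards [hz.eventually_lt_const (EReal.coe_pos.2 hε)] with n hn
  calc F n (z n) ≤ ε + ⨅ x, F n x :=
        (EReal.sub_le_iff_le_add (.inr (EReal.coe_ne_top ε)) (.inr (EReal.coe_ne_bot ε))).1 hn.le
    _ ≤ ε + F n (y n) := add_le_add_right (iInf_le _ _) _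
    _ = F n (y n) + ε := add_comm _ _

/-- In the setting of the abstract convergence-of-almost-minimizers
lemma, if additionally `z ∈ Y`, then `F(z) = inf_Y F` and
`lim_n F_n(z_n) = F(z)`. -/
theorem stmt8 (X : Type*) [MetricSpace X] (Y : Set X)
    (F : X → EReal) (Fn : ℕ → X → EReal)
    (hliminf : ∀ (x : X) (xn : ℕ → X), Tendsto xn atTop (nhds x) →
      F x ≤ liminf (fun n => Fn n (xn n)) atTop)
    (hlimsup : ∀ y ∈ Y, ∃ yn : ℕ → X,
      limsup (fun n => Fn n (yn n)) atTop ≤ F y)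
    (z : X) (zn : ℕ → X) (hzn : Tendsto zn atTop (nhds z))
    (halm : Tendsto (fun n => Fn n (zn n) - ⨅ x, Fn n x) atTop (nhds 0))
    (hzY : z ∈ Y) :
    F z = ⨅ y ∈ Y, F y ∧
      Tendsto (fun n => Fn n (zn n)) atTop (nhds (F z)) := by
  have hlower : F z ≤ liminf (fun n => Fn n (zn n)) atTop := hliminf z zn hzn
  have hupper : ∀ y ∈ Y, limsup (fun n => Fn n (zn n)) atTop ≤ F y := fun y hy => by
    obtain ⟨yn, hyn⟩ := hlimsup y hy
    exact (limsup_le_limsup_of_tendsto_sub_iInf halm yn).trans hyn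
  refine ⟨le_antisymm (le_iInf₂ fun y hy => ?_) (iInf₂_le z hzY),
    tendsto_of_le_liminf_of_limsup_le hlower (hupper z hzY)⟩
  exact (hlower.trans liminf_le_limsup).trans (hupper y hy)
end

section
/- Let γ_n, γ : S_1 → ℝ^d be arc length parametrized closed curves of length 1 with γ_n → γ in L^1. Then E(γ) ≤ liminf_n E_n(γ_n), where E is the Möbius energy and E_n is the discrete Möbius energy (with E_n(γ_n) = +∞ if γ_n is not an equilateral polygon with n segments). -/
open MeasureTheory Set Filter
open scoped ENNReal Classical

/-- Intrinsic (shortest-path) distance on the circle of length `L`,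
for parameters in `ℝ` taken modulo `L`. -/
noncomputable def circleDist (L s t : ℝ) : ℝ :=
  sInf {r : ℝ | ∃ n : ℤ, r = |s - t + n * L|}

/-- `γ : S_1 → ℝ^d` is a closed curve of length 1 parametrized by arc length:
it is periodic with period 1, chords are dominated by intrinsic distance, and
the length (total variation) of every subarc equals its parameter length. -/
def IsArcLength {d : ℕ} (γ : ℝ → EuclideanSpace ℝ (Fin d)) : Prop :=
  Function.Periodic γ 1 ∧ (∀ s t, ‖γ t - γ s‖ ≤ circleDist 1 s t) ∧
    ∀ s t : ℝ, s ≤ t → t ≤ s + 1 →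
      eVariationOn γ (Set.Icc s t) = ENNReal.ofReal (t - s)

/-- `γ` is (the arc length parametrization of) an equilateral closed polygon
with `n` segments: on each parameter interval `[i/n,(i+1)/n]` it is the affine
segment between the vertices `γ(i/n)` and `γ((i+1)/n)`. -/
def IsEquilateralPolygon {d : ℕ} (n : ℕ) (γ : ℝ → EuclideanSpace ℝ (Fin d)) : Prop :=
  ∀ i : ℕ, i < n → ∀ t ∈ Set.Icc ((i : ℝ) / n) (((i : ℝ) + 1) / n),
    γ t = (((i : ℝ) + 1) - n * t) • γ ((i : ℝ) / n) + (n * t - (i : ℝ)) • γ (((i : ℝ) + 1) / n)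

/-- The Möbius energy, valued in `[0,∞]`. -/
noncomputable def mobiusEnergy {d : ℕ} (γ : ℝ → EuclideanSpace ℝ (Fin d)) : ℝ≥0∞ :=
  ∫⁻ t in Set.Icc (0 : ℝ) 1, ∫⁻ s in Set.Icc (0 : ℝ) 1,
    ((ENNReal.ofReal (‖γ t - γ s‖ ^ 2))⁻¹ - ENNReal.ofReal (1 / circleDist 1 s t ^ 2))

/-- The discrete Möbius energy of an equilateral polygon with `n` segments,
parametrized by arc length (vertex parameters `a_i = i/n`), valued in `[0,∞]`. -/
noncomputable def discreteMobiusEnergy {d : ℕ} (n : ℕ)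
    (γ : ℝ → EuclideanSpace ℝ (Fin d)) : ℝ≥0∞ :=
  ∑ i ∈ Finset.range n, ∑ j ∈ Finset.range n,
    if i = j then 0 else
      ((ENNReal.ofReal (‖γ ((j : ℝ) / n) - γ ((i : ℝ) / n)‖ ^ 2))⁻¹
          - ENNReal.ofReal (1 / circleDist 1 ((i : ℝ) / n) ((j : ℝ) / n) ^ 2))
        * ENNReal.ofReal (1 / (n : ℝ) ^ 2)

/-- The discrete Möbius energy extended by `+∞` outside the equilateral
polygons with `n` segments. -/
noncomputable def discreteMobiusEnergyExt {d : ℕ} (n : ℕ)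
    (γ : ℝ → EuclideanSpace ℝ (Fin d)) : ℝ≥0∞ :=
  if IsEquilateralPolygon n γ then discreteMobiusEnergy n γ else ⊤

/-! An arc length curve is `1`-Lipschitz, so for such curves `L¹` convergence upgrades to
pointwise convergence on `(0, 1)`, and even to convergence along the grid points
`⌊t n⌋₊ / n → t`. The discrete energy `E_n(p_n)` is the double integral over `[0,1]²` of the
Möbius integrand of `p_n` sampled at grid points (and set to zero on the diagonal squares);
off the diagonal these step functions converge to the Möbius integrand of `γ`, and Fatou's lemma,
applied to the inner and then to the outer integral, gives the liminf inequality. -/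

open Topology

lemma circleDist_eq_norm (L s t : ℝ) : circleDist L s t = ‖((s - t : ℝ) : AddCircle L)‖ := by
  rw [circleDist, ← QuotientAddGroup.mk'_apply, quotient_norm_mk_eq]
  congr 1
  ext r
  simp [AddSubgroup.mem_zmultiples_iff, zsmul_eq_mul, eq_comm]

lemma Filter.Tendsto.circleDist {ι : Type*} {l : Filter ι} {L : ℝ} {x y : ι → ℝ}
    {s t : ℝ} (hx : Tendsto x l (𝓝 s)) (hy : Tendsto y l (𝓝 t)) :
    Tendsto (fun n => circleDist L (x n) (y n)) l (𝓝 (circleDist L s t)) := by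
  simp_rw [circleDist_eq_norm]
  exact (((AddCircle.continuous_mk' L).tendsto _).comp (hx.sub hy)).norm

lemma circleDist_ne_zero {L s t : ℝ} (hL : 0 < L) (hs : s ∈ Ico 0 L) (ht : t ∈ Ico 0 L)
    (hst : s ≠ t) : circleDist L s t ≠ 0 := by
  have := Fact.mk hL
  rw [circleDist_eq_norm, norm_ne_zero_iff, AddCircle.coe_sub, sub_ne_zero, Ne,
    AddCircle.coe_eq_coe_iff_of_mem_Ico (a := 0) (by simpa using hs) (by simpa using ht)]
  exact hst

lemma circleDist_le_abs (L s t : ℝ) : circleDist L s t ≤ |s - t| := by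
  rw [circleDist_eq_norm]
  exact QuotientAddGroup.norm_mk_le_norm

lemma IsArcLength.lipschitzWith {d : ℕ} {γ : ℝ → EuclideanSpace ℝ (Fin d)} (h : IsArcLength γ) :
    LipschitzWith 1 γ :=
  LipschitzWith.of_dist_le_mul fun s t => by
    rw [dist_eq_norm, NNReal.coe_one, one_mul, dist_comm, Real.dist_eq]
    exact (h.2.1 t s).trans (circleDist_le_abs 1 t s)

lemma mul_sub_le_intervalIntegral_of_lipschitzWith {h : ℝ → ℝ} {K : NNReal}
    (hlip : LipschitzWith K h) (hnonneg : ∀ s, 0 ≤ h s) {a b t δ : ℝ} (hδ : 0 ≤ δ)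
    (ha : a ≤ t - δ) (hb : t + δ ≤ b) :
    2 * δ * (h t - K * δ) ≤ ∫ s in a..b, h s := by
  have hint : ∀ u v, IntervalIntegrable h volume u v :=
    fun u v => hlip.continuous.intervalIntegrable u v
  calc 2 * δ * (h t - K * δ) = ∫ _ in (t - δ)..(t + δ), (h t - K * δ) := by
        simp only [intervalIntegral.integral_const, smul_eq_mul]; ring
    _ ≤ ∫ s in (t - δ)..(t + δ), h s := by
        refine intervalIntegral.integral_mono_on (by linarith) intervalIntegrable_const
          (hint _ _) fun s hs => ?_
        have hdist : |h t - h s| ≤ K * |t - s| := by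
          simpa [Real.dist_eq] using hlip.dist_le_mul t s
        have hts : |t - s| ≤ δ := abs_sub_le_iff.2 ⟨by linarith [hs.1], by linarith [hs.2]⟩
        nlinarith [le_abs_self (h t - h s), K.coe_nonneg]
    _ ≤ ∫ s in a..b, h s :=
        intervalIntegral.integral_mono_interval ha (by linarith) hb
          (Eventually.of_forall fun s => hnonneg s) (hint a b)

lemma tendsto_zero_of_intervalIntegral_tendsto_zero {h : ℕ → ℝ → ℝ} {K : NNReal}
    (hlip : ∀ n, LipschitzWith K (h n)) (hnonneg : ∀ n s, 0 ≤ h n s) {a b t : ℝ}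
    (hint : Tendsto (fun n => ∫ s in a..b, h n s) atTop (𝓝 0)) (ht : t ∈ Ioo a b) :
    Tendsto (fun n => h n t) atTop (𝓝 0) := by
  rw [tendsto_order]
  refine ⟨fun c hc => Eventually.of_forall fun n => hc.trans_le (hnonneg n t), fun ε hε => ?_⟩
  set δ := min (min (t - a) (b - t)) (ε / (2 * (K + 1)))
  have hδ : 0 < δ := lt_min (lt_min (by linarith [ht.1]) (by linarith [ht.2])) (by positivity)
  have hδK : 2 * (K + 1) * δ ≤ ε := by
    have := min_le_right (min (t - a) (b - t)) (ε / (2 * (K + 1)))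
    rwa [le_div_iff₀' (by positivity)] at this
  have hδa : δ ≤ t - a := (min_le_left _ _).trans (min_le_left _ _)
  have hδb : δ ≤ b - t := (min_le_left _ _).trans (min_le_right _ _)
  filter_upwards [(tendsto_order.1 hint).2 (δ * ε) (by positivity)] with n hn
  have := mul_sub_le_intervalIntegral_of_lipschitzWith (hlip n) (hnonneg n) hδ.le
    (a := a) (b := b) (t := t) (by linarith) (by linarith)
  nlinarith [K.coe_nonneg]

lemma tendsto_apply_of_lipschitzWith {α β ι : Type*} [PseudoMetricSpace α] [PseudoMetricSpace β]
    {f : ι → α → β} {K : NNReal} (hlip : ∀ n, LipschitzWith K (f n)) {l : Filter ι}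
    {x : ι → α} {t : α} {y : β} (hx : Tendsto x l (𝓝 t))
    (hf : Tendsto (fun n => f n t) l (𝓝 y)) : Tendsto (fun n => f n (x n)) l (𝓝 y) := by
  rw [tendsto_iff_dist_tendsto_zero] at hx hf ⊢
  refine squeeze_zero (fun n => dist_nonneg) (fun n => ?_)
    (by simpa using (hx.const_mul (K : ℝ)).add hf)
  exact (dist_triangle _ _ _).trans (add_le_add_left ((hlip n).dist_le_mul _ _) _)

lemma tendsto_apply_of_intervalIntegral_norm_sub_tendsto_zero {E : Type*}
    [SeminormedAddCommGroup E] {γ : ℝ → E} {p : ℕ → ℝ → E} {K K' : NNReal}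
    (hγ : LipschitzWith K γ) (hp : ∀ n, LipschitzWith K' (p n)) {a b t : ℝ}
    (hconv : Tendsto (fun n => ∫ s in a..b, ‖p n s - γ s‖) atTop (𝓝 0)) (ht : t ∈ Ioo a b) :
    Tendsto (fun n => p n t) atTop (𝓝 (γ t)) :=
  tendsto_iff_norm_sub_tendsto_zero.2 <| tendsto_zero_of_intervalIntegral_tendsto_zero
    (fun n => lipschitzWith_one_norm.comp ((hp n).sub hγ)) (fun _ _ => norm_nonneg _) hconv ht

lemma tendsto_natFloor_mul_div {t : ℝ} (ht : 0 ≤ t) :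
    Tendsto (fun n : ℕ => (⌊t * n⌋₊ : ℝ) / n) atTop (𝓝 t) :=
  (tendsto_nat_floor_mul_div_atTop ht).comp tendsto_natCast_atTop_atTop

lemma natFloor_mul_eq_of_mem_Ico {n i : ℕ} (hn : 0 < n) {t : ℝ}
    (ht : t ∈ Ico ((i : ℝ) / n) ((i + 1) / n)) : ⌊t * n⌋₊ = i := by
  have hn' : (0 : ℝ) < n := by exact_mod_cast hn
  rw [mem_Ico, div_le_iff₀ hn', lt_div_iff₀ hn'] at ht
  exact (Nat.floor_eq_iff (by linarith [(i.cast_nonneg : (0 : ℝ) ≤ i)])).2 ht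

lemma Ico_zero_one_eq_biUnion {n : ℕ} (hn : 0 < n) :
    Ico (0 : ℝ) 1 = ⋃ i ∈ Finset.range n, Ico ((i : ℝ) / n) ((i + 1) / n) := by
  have hn' : (0 : ℝ) < n := by exact_mod_cast hn
  ext t
  simp only [mem_iUnion, Finset.mem_range, exists_prop, mem_Ico]
  constructor
  · rintro ⟨h0, h1⟩
    have htn : 0 ≤ t * n := by positivity
    refine ⟨⌊t * n⌋₊, (Nat.floor_lt htn).2 (by nlinarith), ?_, ?_⟩
    · rw [div_le_iff₀ hn']; exact Nat.floor_le htn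
    · rw [lt_div_iff₀ hn']; exact Nat.lt_floor_add_one _
  · rintro ⟨i, hi, h0, h1⟩
    have hi' : (i : ℝ) + 1 ≤ n := by exact_mod_cast hi
    exact ⟨le_trans (by positivity) h0, h1.trans_le (by rwa [div_le_one hn'])⟩

lemma setLIntegral_Icc_comp_natFloor_mul {n : ℕ} (hn : 0 < n) (c : ℕ → ℝ≥0∞) :
    ∫⁻ t in Icc (0 : ℝ) 1, c ⌊t * n⌋₊ = ∑ i ∈ Finset.range n, c i * (n : ℝ≥0∞)⁻¹ := by
  have hdisj : (↑(Finset.range n) : Set ℕ).PairwiseDisjoint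
      fun i : ℕ => Ico ((i : ℝ) / n) ((i + 1) / n) := fun i _ j _ hij =>
    disjoint_left.2 fun t hi hj =>
      hij ((natFloor_mul_eq_of_mem_Ico hn hi).symm.trans (natFloor_mul_eq_of_mem_Ico hn hj))
  rw [setLIntegral_congr Ico_ae_eq_Icc.symm, Ico_zero_one_eq_biUnion hn,
    lintegral_biUnion_finset hdisj fun _ _ => measurableSet_Ico]
  refine Finset.sum_congr rfl fun i _ => ?_
  rw [setLIntegral_congr_fun measurableSet_Ico fun t ht => by
      rw [natFloor_mul_eq_of_mem_Ico hn ht],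
    setLIntegral_const, Real.volume_Ico, ← sub_div, add_sub_cancel_left,
    ENNReal.ofReal_div_of_pos (by exact_mod_cast hn)]
  simp

theorem lintegral_lintegral_le_liminf {α β : Type*} [MeasurableSpace α] [MeasurableSpace β]
    {μ : Measure α} {ν : Measure β} [SFinite ν] {f : α → β → ℝ≥0∞}
    {F : ℕ → α → β → ℝ≥0∞} (hF : ∀ n, Measurable (Function.uncurry (F n)))
    (hf : ∀ᵐ a ∂μ, ∀ᵐ b ∂ν, f a b ≤ liminf (fun n => F n a b) atTop) :
    ∫⁻ a, ∫⁻ b, f a b ∂ν ∂μ ≤ liminf (fun n => ∫⁻ a, ∫⁻ b, F n a b ∂ν ∂μ) atTop :=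
  calc ∫⁻ a, ∫⁻ b, f a b ∂ν ∂μ ≤ ∫⁻ a, liminf (fun n => ∫⁻ b, F n a b ∂ν) atTop ∂μ :=
        lintegral_mono_ae <| hf.mono fun _ ha => (lintegral_mono_ae ha).trans <|
          lintegral_liminf_le fun n => (hF n).comp measurable_prodMk_left
    _ ≤ liminf (fun n => ∫⁻ a, ∫⁻ b, F n a b ∂ν ∂μ) atTop :=
        lintegral_liminf_le fun n => (hF n).lintegral_prod_right'

section Energy

variable {E : Type*} [SeminormedAddCommGroup E]

-- `mobiusEnergy γ` is by definition the integral of `mobiusIntegrand γ` over `[0,1]²`.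
noncomputable def mobiusIntegrand (γ : ℝ → E) (t s : ℝ) : ℝ≥0∞ :=
  (ENNReal.ofReal (‖γ t - γ s‖ ^ 2))⁻¹ - ENNReal.ofReal (1 / circleDist 1 s t ^ 2)

-- The `(i, j)` summand of `discreteMobiusEnergy n γ` is `discreteMobiusKernel γ n i j / n²`; with
-- this order of the indices `discreteMobiusKernel γ n ⌊s n⌋₊ ⌊t n⌋₊` samples `mobiusIntegrand γ`
-- near `(t, s)`.
noncomputable def discreteMobiusKernel (γ : ℝ → E) (n i j : ℕ) : ℝ≥0∞ :=
  if i = j then 0 else mobiusIntegrand γ ((j : ℝ) / n) ((i : ℝ) / n)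

lemma tendsto_mobiusIntegrand {ι : Type*} {l : Filter ι} {γ : ℝ → E} {p : ι → ℝ → E}
    {x y : ι → ℝ} {t s : ℝ} (hx : Tendsto x l (𝓝 t)) (hy : Tendsto y l (𝓝 s))
    (hpx : Tendsto (fun n => p n (x n)) l (𝓝 (γ t)))
    (hpy : Tendsto (fun n => p n (y n)) l (𝓝 (γ s))) (hst : circleDist 1 s t ≠ 0) :
    Tendsto (fun n => mobiusIntegrand (p n) (x n) (y n)) l (𝓝 (mobiusIntegrand γ t s)) := by
  have hchord : Tendsto (fun n => (ENNReal.ofReal (‖p n (x n) - p n (y n)‖ ^ 2))⁻¹) l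
      (𝓝 (ENNReal.ofReal (‖γ t - γ s‖ ^ 2))⁻¹) :=
    tendsto_inv_iff.2 (ENNReal.tendsto_ofReal (((hpx.sub hpy).norm).pow 2))
  have hinvdist : Tendsto (fun n => ENNReal.ofReal (1 / circleDist 1 (y n) (x n) ^ 2)) l
      (𝓝 (ENNReal.ofReal (1 / circleDist 1 s t ^ 2))) :=
    ENNReal.tendsto_ofReal (tendsto_const_nhds.div ((hy.circleDist hx).pow 2) (pow_ne_zero 2 hst))
  unfold mobiusIntegrand
  exact ENNReal.Tendsto.sub hchord hinvdist (Or.inr ENNReal.ofReal_ne_top)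

lemma tendsto_discreteMobiusKernel {γ : ℝ → E} {p : ℕ → ℝ → E} {K : NNReal}
    (hp : ∀ n, LipschitzWith K (p n)) {t s : ℝ} (ht : t ∈ Ico (0 : ℝ) 1)
    (hs : s ∈ Ico (0 : ℝ) 1) (hst : s ≠ t) (hpt : Tendsto (fun n => p n t) atTop (𝓝 (γ t)))
    (hps : Tendsto (fun n => p n s) atTop (𝓝 (γ s))) :
    Tendsto (fun n => discreteMobiusKernel (p n) n ⌊s * n⌋₊ ⌊t * n⌋₊) atTop
      (𝓝 (mobiusIntegrand γ t s)) := by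
  have hx := tendsto_natFloor_mul_div ht.1
  have hy := tendsto_natFloor_mul_div hs.1
  have hne : ∀ᶠ n : ℕ in atTop, ⌊s * n⌋₊ ≠ ⌊t * n⌋₊ :=
    ((hy.sub hx).eventually_ne (sub_ne_zero.2 hst)).mono fun n hn h => hn (by rw [h, sub_self])
  refine (tendsto_mobiusIntegrand hx hy (tendsto_apply_of_lipschitzWith hp hx hpt)
    (tendsto_apply_of_lipschitzWith hp hy hps) (circleDist_ne_zero one_pos hs ht hst)).congr' ?_
  filter_upwards [hne] with n hn
  rw [discreteMobiusKernel, if_neg hn]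

end Energy

lemma measurable_comp_natFloor_mul (n : ℕ) (c : ℕ → ℕ → ℝ≥0∞) :
    Measurable fun x : ℝ × ℝ => c ⌊x.2 * n⌋₊ ⌊x.1 * n⌋₊ :=
  (measurable_of_countable (Function.uncurry c)).comp
    ((Nat.measurable_floor.comp (measurable_snd.mul_const _)).prodMk
      (Nat.measurable_floor.comp (measurable_fst.mul_const _)))

lemma ofReal_one_div_natCast_sq {n : ℕ} (hn : 0 < n) :
    ENNReal.ofReal (1 / (n : ℝ) ^ 2) = (n : ℝ≥0∞)⁻¹ * (n : ℝ≥0∞)⁻¹ := by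
  rw [one_div, ENNReal.ofReal_inv_of_pos (by positivity), ← ENNReal.mul_inv (by simp) (by simp)]
  simp [sq]

lemma discreteMobiusEnergy_eq_lintegral {d n : ℕ} (hn : 0 < n)
    (γ : ℝ → EuclideanSpace ℝ (Fin d)) :
    discreteMobiusEnergy n γ =
      ∫⁻ t in Icc (0 : ℝ) 1, ∫⁻ s in Icc (0 : ℝ) 1,
        discreteMobiusKernel γ n ⌊s * n⌋₊ ⌊t * n⌋₊ := by
  have hinner : ∀ t : ℝ, ∫⁻ s in Icc (0 : ℝ) 1, discreteMobiusKernel γ n ⌊s * n⌋₊ ⌊t * n⌋₊ =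
      ∑ i ∈ Finset.range n, discreteMobiusKernel γ n i ⌊t * n⌋₊ * (n : ℝ≥0∞)⁻¹ :=
    fun t => setLIntegral_Icc_comp_natFloor_mul hn fun i => discreteMobiusKernel γ n i ⌊t * n⌋₊
  simp_rw [hinner]
  rw [setLIntegral_Icc_comp_natFloor_mul hn
      fun j => ∑ i ∈ Finset.range n, discreteMobiusKernel γ n i j * (n : ℝ≥0∞)⁻¹,
    discreteMobiusEnergy, Finset.sum_comm]
  refine Finset.sum_congr rfl fun j _ => ?_
  rw [Finset.sum_mul]
  refine Finset.sum_congr rfl fun i _ => ?_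
  rw [discreteMobiusKernel, ofReal_one_div_natCast_sq hn, mobiusIntegrand]
  split_ifs <;> simp [mul_assoc]

lemma discreteMobiusEnergy_le_discreteMobiusEnergyExt {d : ℕ} (n : ℕ)
    (γ : ℝ → EuclideanSpace ℝ (Fin d)) :
    discreteMobiusEnergy n γ ≤ discreteMobiusEnergyExt n γ := by
  rw [discreteMobiusEnergyExt]
  split_ifs
  exacts [le_rfl, le_top]

/-- liminf inequality: if arc length curves `γ_n → γ` in `L¹`,
then `E(γ) ≤ liminf_n E_n(γ_n)`, where `E_n(γ_n) = +∞` if `γ_n` is not an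
equilateral polygon with `n` segments. -/
theorem stmt9 (d : ℕ) (γ : ℝ → EuclideanSpace ℝ (Fin d))
    (p : ℕ → ℝ → EuclideanSpace ℝ (Fin d))
    (hγ : IsArcLength γ) (hp : ∀ n, IsArcLength (p n))
    (hconv : Tendsto (fun n => ∫ t in (0:ℝ)..1, ‖p n t - γ t‖) atTop (nhds 0)) :
    mobiusEnergy γ ≤ liminf (fun n => discreteMobiusEnergyExt n (p n)) atTop := by
  have hlip : ∀ n, LipschitzWith 1 (p n) := fun n => (hp n).lipschitzWith
  have hlim : ∀ t ∈ Ioo (0 : ℝ) 1, Tendsto (fun n => p n t) atTop (𝓝 (γ t)) := fun t ht =>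
    tendsto_apply_of_intervalIntegral_norm_sub_tendsto_zero hγ.lipschitzWith hlip hconv ht
  have hae : ∀ᵐ t ∂volume.restrict (Icc (0 : ℝ) 1), ∀ᵐ s ∂volume.restrict (Icc (0 : ℝ) 1),
      mobiusIntegrand γ t s ≤
        liminf (fun n => discreteMobiusKernel (p n) n ⌊s * n⌋₊ ⌊t * n⌋₊) atTop := by
    rw [Measure.restrict_congr_set Ioo_ae_eq_Icc.symm]
    filter_upwards [ae_restrict_mem measurableSet_Ioo] with t ht
    filter_upwards [ae_restrict_mem measurableSet_Ioo, ae_restrict_of_ae (Measure.ae_ne volume t)]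
      with s hs hst
    exact (tendsto_discreteMobiusKernel hlip (Ioo_subset_Ico_self ht) (Ioo_subset_Ico_self hs) hst
      (hlim t ht) (hlim s hs)).liminf_eq.ge
  calc mobiusEnergy γ
      ≤ liminf (fun n : ℕ => ∫⁻ t in Icc (0 : ℝ) 1, ∫⁻ s in Icc (0 : ℝ) 1,
          discreteMobiusKernel (p n) n ⌊s * n⌋₊ ⌊t * n⌋₊) atTop :=
        lintegral_lintegral_le_liminf (fun n => measurable_comp_natFloor_mul n _) hae
    _ = liminf (fun n => discreteMobiusEnergy n (p n)) atTop :=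
        liminf_congr <| (eventually_gt_atTop 0).mono fun n hn =>
          (discreteMobiusEnergy_eq_lintegral hn (p n)).symm
    _ ≤ liminf (fun n => discreteMobiusEnergyExt n (p n)) atTop :=
        liminf_le_liminf <| Eventually.of_forall fun n =>
          discreteMobiusEnergy_le_discreteMobiusEnergyExt n (p n)
end

section
/- Let γ : S_1 → ℝ^d be a C^1 arc length curve. Then there exists d > 0 such that for all x ∈ S_1 and all s, t, y ∈ B_{3d}(x): |⟨γ(s)-γ(t), γ(x)-γ(y)⟩| ≥ cos(1/4) · |γ(s)-γ(t)| · |γ(x)-γ(y)| (the (d, 1/4) diamond property). -/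
/-!
Unit speed makes `γ` 1-Lipschitz, so `‖γ b - γ a‖ ≤ b - a`. Being continuous and periodic, `γ'` is
uniformly continuous, so unit tangents at parameters closer than some `δ` have inner product at
least `cos (1/4)`. On a parameter window of length `δ`, the mean value inequality for
`u ↦ ⟪w, γ u⟫`, applied once with `w = γ' u` and once with `w = γ q - γ p`, gives
`⟪γ b - γ a, γ q - γ p⟫ ≥ cos (1/4) (b - a) (q - p)`, which dominates
`cos (1/4) ‖γ b - γ a‖ ‖γ q - γ p‖`. Points within circle distance `3δ/8` of `x` have
representatives in the window of length `δ` centred at `x`.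
-/

open Set
open scoped RealInnerProductSpace

theorem Function.Periodic.deriv {E : Type*} [NormedAddCommGroup E] [NormedSpace ℝ E]
    {f : ℝ → E} {c : ℝ} (hf : Function.Periodic f c) : Function.Periodic (deriv f) c :=
  fun x => by rw [← deriv_comp_add_const, hf.funext]

theorem Function.Periodic.uniformContinuous_of_continuous {α : Type*} [UniformSpace α]
    {f : ℝ → α} {p : ℝ} (hf : Function.Periodic f p) (hp : 0 < p) (hcont : Continuous f) :
    UniformContinuous f := by
  have := Fact.mk hp
  have hlift : Continuous (hf.lift : AddCircle p → α) :=
    (QuotientAddGroup.isQuotientMap_mk _).continuous_iff.mpr hcont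
  have hmk : LipschitzWith 1 ((↑) : ℝ → AddCircle p) :=
    LipschitzWith.of_dist_le_mul fun x y => by
      simpa [dist_eq_norm, ← QuotientAddGroup.mk_sub] using
        QuotientAddGroup.norm_mk_le_norm (S := AddSubgroup.zmultiples p) (m := x - y)
  exact (CompactSpace.uniformContinuous_of_continuous hlift).comp hmk.uniformContinuous

theorem Function.Periodic.exists_mem_Ioo_eq_of_circleDist_lt {α : Type*} {f : ℝ → α} {L : ℝ}
    (hf : Function.Periodic f L) {z x r : ℝ} (h : circleDist L z x < r) :
    ∃ z' ∈ Ioo (x - r) (x + r), f z' = f z := by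
  obtain ⟨_, ⟨n, rfl⟩, hn⟩ := exists_lt_of_csInf_lt (s := {r | ∃ n : ℤ, r = |z - x + n * L|})
    ⟨_, 0, rfl⟩ h
  refine ⟨z + n * L, ?_, hf.int_mul n z⟩
  constructor <;> linarith [abs_lt.mp hn]

section InnerProductSpace

variable {E : Type*} [NormedAddCommGroup E] [InnerProductSpace ℝ E]

theorem one_sub_norm_sub_le_inner {v w : E} (hv : ‖v‖ = 1) : 1 - ‖v - w‖ ≤ ⟪v, w⟫ := by
  have := real_inner_le_norm v (v - w)
  rw [inner_sub_right, real_inner_self_eq_norm_sq, hv, one_pow, one_mul] at this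
  linarith

theorem UniformContinuous.exists_pos_le_inner {α : Type*} [PseudoMetricSpace α] {f : α → E}
    (hf : UniformContinuous f) (hunit : ∀ u, ‖f u‖ = 1) {c : ℝ} (hc : c < 1) :
    ∃ δ > 0, ∀ u v, dist u v < δ → c ≤ ⟪f u, f v⟫ := by
  obtain ⟨δ, hδ, hclose⟩ := Metric.uniformContinuous_iff.mp hf (1 - c) (sub_pos.mpr hc)
  refine ⟨δ, hδ, fun u v huv => ?_⟩
  have := hclose huv
  rw [dist_eq_norm] at this
  linarith [one_sub_norm_sub_le_inner (w := f v) (hunit u)]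

theorem mul_sub_le_inner_sub_of_le_inner_deriv {f f' : ℝ → E} {a b C : ℝ} (w : E)
    (hf : ∀ u ∈ Icc a b, HasDerivAt f (f' u) u) (hC : ∀ u ∈ Icc a b, C ≤ ⟪w, f' u⟫)
    (hab : a ≤ b) : C * (b - a) ≤ ⟪w, f b - f a⟫ := by
  have hg : ∀ u ∈ Icc a b, HasDerivAt (fun u => ⟪w, f u⟫) ⟪w, f' u⟫ u := fun u hu => by
    simpa using (hasDerivAt_const u w).inner ℝ (hf u hu)
  rw [inner_sub_right]
  refine (convex_Icc a b).mul_sub_le_image_sub_of_le_deriv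
    (fun u hu => (hg u hu).continuousAt.continuousWithinAt)
    (fun u hu => (hg u (interior_subset hu)).differentiableAt.differentiableWithinAt)
    (fun u hu => ?_) a (left_mem_Icc.mpr hab) b (right_mem_Icc.mpr hab) hab
  rw [(hg u (interior_subset hu)).deriv]
  exact hC u (interior_subset hu)

theorem mul_mul_le_inner_sub_sub_of_le_inner_deriv {f f' : ℝ → E} {a b p q C : ℝ}
    (hf : ∀ u, HasDerivAt f (f' u) u) (hC : ∀ u ∈ Icc a b, ∀ v ∈ Icc p q, C ≤ ⟪f' u, f' v⟫)
    (hab : a ≤ b) (hpq : p ≤ q) : C * (b - a) * (q - p) ≤ ⟪f b - f a, f q - f p⟫ := by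
  have hinner : ∀ u ∈ Icc a b, C * (q - p) ≤ ⟪f q - f p, f' u⟫ := fun u hu => by
    rw [real_inner_comm]
    exact mul_sub_le_inner_sub_of_le_inner_deriv _ (fun v _ => hf v) (hC u hu) hpq
  rw [mul_right_comm, real_inner_comm]
  exact mul_sub_le_inner_sub_of_le_inner_deriv _ (fun u _ => hf u) hinner hab

theorem mul_norm_mul_norm_le_abs_inner_of_le_inner_deriv {f f' : ℝ → E} {S : Set ℝ}
    [S.OrdConnected] {C : ℝ} (hf : ∀ u, HasDerivAt f (f' u) u) (hlip : LipschitzWith 1 f)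
    (hC₀ : 0 ≤ C) (hC : ∀ u ∈ S, ∀ v ∈ S, C ≤ ⟪f' u, f' v⟫) {a b p q : ℝ}
    (ha : a ∈ S) (hb : b ∈ S) (hp : p ∈ S) (hq : q ∈ S) :
    C * ‖f a - f b‖ * ‖f p - f q‖ ≤ |⟪f a - f b, f p - f q⟫| := by
  wlog hab : b ≤ a generalizing a b
  · have := this hb ha (le_of_not_ge hab)
    rwa [norm_sub_rev (f b), ← neg_sub (f a), inner_neg_left, abs_neg] at this
  wlog hpq : q ≤ p generalizing p q
  · have := this hq hp (le_of_not_ge hpq)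
    rwa [norm_sub_rev (f q), ← neg_sub (f p), inner_neg_right, abs_neg] at this
  have hnorm : ∀ {u v}, v ≤ u → ‖f u - f v‖ ≤ u - v := fun {u v} h => by
    simpa [abs_of_nonneg (sub_nonneg.mpr h)] using hlip.norm_sub_le u v
  calc C * ‖f a - f b‖ * ‖f p - f q‖ ≤ C * (a - b) * (p - q) := by
        gcongr
        exacts [hnorm hab, hnorm hpq]
    _ ≤ ⟪f a - f b, f p - f q⟫ :=
        mul_mul_le_inner_sub_sub_of_le_inner_deriv hf
          (fun u hu v hv => hC u (Set.Icc_subset S hb ha hu) v (Set.Icc_subset S hq hp hv))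
          hab hpq
    _ ≤ _ := le_abs_self _

end InnerProductSpace

/-- every `C^1` arc length closed curve `γ : S_1 → ℝ^d` has the
`(d, 1/4)` diamond property for some `d > 0`: for all `x` and all
`s, t, y ∈ B_{3d}(x)` (intrinsic balls),
`|⟨γ(s)-γ(t), γ(x)-γ(y)⟩| ≥ cos(1/4) |γ(s)-γ(t)| |γ(x)-γ(y)|`. -/
theorem stmt16 (dim : ℕ) (γ γ' : ℝ → EuclideanSpace ℝ (Fin dim))
    (hper : Function.Periodic γ 1)
    (hderiv : ∀ t, HasDerivAt γ (γ' t) t)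
    (hcont : Continuous γ') (hunit : ∀ t, ‖γ' t‖ = 1) :
    ∃ d > (0:ℝ), ∀ x s t y : ℝ,
      circleDist 1 s x ≤ 3 * d → circleDist 1 t x ≤ 3 * d →
      circleDist 1 y x ≤ 3 * d →
      Real.cos (1 / 4) * ‖γ s - γ t‖ * ‖γ x - γ y‖
        ≤ |⟪γ s - γ t, γ x - γ y⟫| := by
  have hπ := Real.pi_gt_three
  have hcos₀ : 0 ≤ Real.cos (1 / 4) := Real.cos_nonneg_of_neg_pi_div_two_le_of_le
    (by linarith) (by linarith)
  have hcos₁ : Real.cos (1 / 4) < 1 := by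
    simpa using Real.cos_lt_cos_of_nonneg_of_le_pi_div_two le_rfl (by linarith)
      (by norm_num : (0 : ℝ) < 1 / 4)
  have hγ' : deriv γ = γ' := funext fun t => (hderiv t).deriv
  have hlip : LipschitzWith 1 γ := lipschitzWith_of_nnnorm_deriv_le
    (fun t => (hderiv t).differentiableAt) fun t => by simp [hγ', ← NNReal.coe_le_coe, hunit]
  obtain ⟨δ, hδ, hclose⟩ := ((hγ' ▸ hper.deriv).uniformContinuous_of_continuous one_pos
    hcont).exists_pos_le_inner hunit hcos₁
  refine ⟨δ / 8, by positivity, fun x s t y hs ht hy => ?_⟩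
  have hnear : ∀ z, circleDist 1 z x ≤ 3 * (δ / 8) →
      ∃ z' ∈ Ioo (x - δ / 2) (x + δ / 2), γ z' = γ z := fun z hz =>
    hper.exists_mem_Ioo_eq_of_circleDist_lt (by linarith)
  obtain ⟨s', hs', hγs⟩ := hnear s hs
  obtain ⟨t', ht', hγt⟩ := hnear t ht
  obtain ⟨y', hy', hγy⟩ := hnear y hy
  rw [← hγs, ← hγt, ← hγy]
  refine mul_norm_mul_norm_le_abs_inner_of_le_inner_deriv hderiv hlip hcos₀
    (fun u hu v hv => hclose u v ?_) hs' ht' ⟨by linarith, by linarith⟩ hy'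
  rw [Real.dist_eq, abs_lt]
  constructor <;> linarith [hu.1, hu.2, hv.1, hv.2]
end
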